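/- For every t > 0, the operator S(t)∘i (given by (S(t)i v)(x) = e^{-tx} v) maps ℝ^d into V, and the operator norm satisfies ∫_0^T ‖S(t)i‖_{L(ℝ^d;V)} dt ≤ C(1+T) for some finite constant C depending only on μ. -/

import Mathlib

/-!
Since `x e^{-sx} ≤ 1/s`, the integrand `e^{-2tx}(1+x)ω(x)` is dominated by `(1 + 1/(2t)) ω(x)`,
which is `μ`-integrable on `[0,∞)`. Hence `‖S(t)i‖ ≤ ‖ω‖_{L¹(μ)}^{1/2} (1 + t^{-1/2})`, and
`∫_0^T (1 + t^{-1/2}) dt = T + 2√T ≤ 2(1 + T)`.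
-/

open MeasureTheory Set ENNReal

/-- The weight function `ω(x) = 1 ∧ x^{-1/2}` (with `ω(x) = 1` for `x ≤ 0`). -/
noncomputable def omg (x : ℝ) : ℝ := if x ≤ 0 then 1 else min 1 (x ^ (-(1:ℝ)/2))

lemma omg_nonneg (x : ℝ) : 0 ≤ omg x := by
  unfold omg
  split_ifs
  exacts [zero_le_one, le_min zero_le_one (Real.rpow_nonneg (by linarith) _)]

lemma measurable_omg : Measurable omg :=
  Measurable.ite measurableSet_Iic measurable_const (measurable_const.min (by fun_prop))

lemma exp_neg_mul_mul_one_add_le {s x : ℝ} (hs : 0 < s) (hx : 0 ≤ x) :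
    Real.exp (-(s * x)) * (1 + x) ≤ 1 + 1 / s := by
  have hexp : Real.exp (-(s * x)) ≤ 1 := Real.exp_le_one_iff.mpr (by nlinarith)
  have hmul : s * x * Real.exp (-(s * x)) ≤ 1 :=
    (Real.mul_exp_neg_le_exp_neg_one _).trans (Real.exp_le_one_iff.mpr (by norm_num))
  have hx_exp : x * Real.exp (-(s * x)) ≤ 1 / s := by
    rw [le_div_iff₀ hs]; linarith
  linarith [show Real.exp (-(s * x)) * (1 + x) = Real.exp (-(s * x)) + x * Real.exp (-(s * x))
    by ring]

section SemigroupBound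

variable {μ : Measure ℝ} {t : ℝ}

lemma norm_exp_mul_weight_le (ht : 0 < t) {x : ℝ} (hx : 0 ≤ x) :
    ‖Real.exp (-(2 * t * x)) * ((1 + x) * omg x)‖ ≤ (1 + 1 / (2 * t)) * omg x := by
  have hle := exp_neg_mul_mul_one_add_le (by positivity : 0 < 2 * t) hx
  rw [Real.norm_of_nonneg (by have := omg_nonneg x; positivity), ← mul_assoc]
  exact mul_le_mul_of_nonneg_right hle (omg_nonneg x)

lemma ae_norm_exp_mul_weight_le (ht : 0 < t) :
    ∀ᵐ x ∂μ.restrict (Ici 0),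
      ‖Real.exp (-(2 * t * x)) * ((1 + x) * omg x)‖ ≤ (1 + 1 / (2 * t)) * omg x :=
  (ae_restrict_iff' measurableSet_Ici).mpr (.of_forall fun _ hx => norm_exp_mul_weight_le ht hx)

lemma integrable_exp_mul_weight (hω : Integrable omg (μ.restrict (Ici 0))) (ht : 0 < t) :
    Integrable (fun x => Real.exp (-(2 * t * x)) * ((1 + x) * omg x)) (μ.restrict (Ici 0)) :=
  (hω.const_mul _).mono' (by fun_prop (disch := exact measurable_omg))
    (ae_norm_exp_mul_weight_le ht)

lemma integral_exp_mul_weight_le (hω : Integrable omg (μ.restrict (Ici 0))) (ht : 0 < t) :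
    ∫ x in Ici (0:ℝ), Real.exp (-(2 * t * x)) * ((1 + x) * omg x) ∂μ
      ≤ (1 + 1 / (2 * t)) * ∫ x in Ici (0:ℝ), omg x ∂μ := by
  rw [← integral_const_mul]
  exact integral_mono_ae (integrable_exp_mul_weight hω ht) (hω.const_mul _)
    ((ae_norm_exp_mul_weight_le ht).mono fun _ h => (le_abs_self _).trans h)

lemma sqrt_integral_exp_mul_weight_le (hω : Integrable omg (μ.restrict (Ici 0))) (ht : 0 < t) :
    Real.sqrt (∫ x in Ici (0:ℝ), Real.exp (-(2 * t * x)) * ((1 + x) * omg x) ∂μ)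
      ≤ Real.sqrt (∫ x in Ici (0:ℝ), omg x ∂μ) * (1 + (Real.sqrt t)⁻¹) := by
  have hA : 0 ≤ ∫ x in Ici (0:ℝ), omg x ∂μ := integral_nonneg omg_nonneg
  have hcoef : 1 + 1 / (2 * t) ≤ (1 + (Real.sqrt t)⁻¹) ^ 2 := by
    have h2t : 1 / (2 * t) ≤ ((Real.sqrt t)⁻¹) ^ 2 := by
      rw [inv_pow, Real.sq_sqrt ht.le, one_div]
      exact inv_anti₀ ht (by linarith)
    nlinarith [inv_nonneg.mpr (Real.sqrt_nonneg t)]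
  calc Real.sqrt (∫ x in Ici (0:ℝ), Real.exp (-(2 * t * x)) * ((1 + x) * omg x) ∂μ)
      ≤ Real.sqrt ((1 + (Real.sqrt t)⁻¹) ^ 2 * ∫ x in Ici (0:ℝ), omg x ∂μ) :=
        Real.sqrt_le_sqrt ((integral_exp_mul_weight_le hω ht).trans
          (mul_le_mul_of_nonneg_right hcoef hA))
    _ = Real.sqrt (∫ x in Ici (0:ℝ), omg x ∂μ) * (1 + (Real.sqrt t)⁻¹) := by
        rw [Real.sqrt_mul (sq_nonneg _), Real.sqrt_sq (by positivity), mul_comm]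

end SemigroupBound

lemma inv_sqrt_eq_rpow {t : ℝ} (ht : 0 ≤ t) : (Real.sqrt t)⁻¹ = t ^ (-(1 / 2) : ℝ) := by
  rw [Real.sqrt_eq_rpow, Real.rpow_neg ht]

lemma integrableOn_inv_sqrt_Ioc {T : ℝ} (hT : 0 ≤ T) :
    IntegrableOn (fun t => (Real.sqrt t)⁻¹) (Ioc 0 T) := by
  have h := intervalIntegral.intervalIntegrable_rpow' (a := 0) (b := T)
    (show (-1 : ℝ) < -(1 / 2) by norm_num)
  rw [intervalIntegrable_iff_integrableOn_Ioc_of_le hT] at h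
  exact h.congr_fun (fun t ht => (inv_sqrt_eq_rpow ht.1.le).symm) measurableSet_Ioc

lemma integral_inv_sqrt_Ioc {T : ℝ} (hT : 0 ≤ T) :
    ∫ t in Ioc (0:ℝ) T, (Real.sqrt t)⁻¹ = 2 * Real.sqrt T := by
  rw [setIntegral_congr_fun measurableSet_Ioc (fun t ht => inv_sqrt_eq_rpow ht.1.le),
    ← intervalIntegral.integral_of_le hT, integral_rpow (Or.inl (by norm_num)),
    Real.sqrt_eq_rpow]
  norm_num
  ring

lemma setIntegral_Ioc_le_of_le_mul_one_add_inv_sqrt {f : ℝ → ℝ} {c T : ℝ} (hT : 0 ≤ T)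
    (hc : 0 ≤ c) (hf0 : ∀ t ∈ Ioc 0 T, 0 ≤ f t)
    (hf : ∀ t ∈ Ioc 0 T, f t ≤ c * (1 + (Real.sqrt t)⁻¹)) :
    ∫ t in Ioc 0 T, f t ≤ 2 * c * (1 + T) := by
  have hone : IntegrableOn (fun _ => (1 : ℝ)) (Ioc 0 T) :=
    integrableOn_const measure_Ioc_lt_top.ne
  have hbound : IntegrableOn (fun t => c * (1 + (Real.sqrt t)⁻¹)) (Ioc 0 T) :=
    (hone.add (integrableOn_inv_sqrt_Ioc hT)).const_mul c
  have hsqrt : Real.sqrt T ≤ (1 + T) / 2 := by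
    nlinarith [Real.sq_sqrt hT, sq_nonneg (Real.sqrt T - 1)]
  calc ∫ t in Ioc 0 T, f t
      ≤ ∫ t in Ioc 0 T, c * (1 + (Real.sqrt t)⁻¹) :=
        integral_mono_of_nonneg ((ae_restrict_iff' measurableSet_Ioc).mpr (.of_forall hf0))
          hbound ((ae_restrict_iff' measurableSet_Ioc).mpr (.of_forall hf))
    _ = c * (T + 2 * Real.sqrt T) := by
        rw [integral_const_mul, integral_add hone (integrableOn_inv_sqrt_Ioc hT),
          integral_inv_sqrt_Ioc hT, setIntegral_const, Real.volume_real_Ioc_of_le hT]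
        simp
    _ ≤ 2 * c * (1 + T) := by nlinarith

theorem stmt_6_general (μ : Measure ℝ)
    (hω : Integrable omg (μ.restrict (Ici 0))) :
    ∃ C : ℝ, 0 ≤ C ∧
      (∀ t : ℝ, 0 < t →
        Integrable (fun x => Real.exp (-(2 * t * x)) * ((1 + x) * omg x))
          (μ.restrict (Ici 0))) ∧
      (∀ T : ℝ, 0 < T →
        (∫ t in Ioc (0:ℝ) T,
            Real.sqrt (∫ x in Ici (0:ℝ),
              Real.exp (-(2 * t * x)) * ((1 + x) * omg x) ∂μ)) ≤ C * (1 + T)) := by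
  set A := ∫ x in Ici (0:ℝ), omg x ∂μ
  refine ⟨2 * Real.sqrt A, by positivity, fun t ht => integrable_exp_mul_weight hω ht,
    fun T hT => ?_⟩
  exact setIntegral_Ioc_le_of_le_mul_one_add_inv_sqrt hT.le (Real.sqrt_nonneg A)
    (fun _ _ => Real.sqrt_nonneg _) (fun _ ht => sqrt_integral_exp_mul_weight_le hω ht.1)

/-- For `t > 0`, `S(t)i` maps `ℝ^d` into `V` (i.e. its `V`-operator norm
`‖S(t)i‖² = ∫ e^{-2tx}(1+x)ω(x) μ(dx)` is finite), and
`∫_0^T ‖S(t)i‖_{L(ℝ^d;V)} dt ≤ C(1+T)` for a constant `C` depending only on `μ`. -/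
theorem stmt_6 (μ : Measure ℝ)
    (hω : Integrable omg (μ.restrict (Ici 0))) (hω' : 0 ≤ᵐ[μ.restrict (Ici 0)] omg) :
    ∃ C : ℝ, 0 ≤ C ∧
      (∀ t : ℝ, 0 < t →
        Integrable (fun x => Real.exp (-(2 * t * x)) * ((1 + x) * omg x))
          (μ.restrict (Ici 0))) ∧
      (∀ T : ℝ, 0 < T →
        (∫ t in Ioc (0:ℝ) T,
            Real.sqrt (∫ x in Ici (0:ℝ),
              Real.exp (-(2 * t * x)) * ((1 + x) * omg x) ∂μ)) ≤ C * (1 + T)) :=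
  stmt_6_general μ hω
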